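/- Simplifying equalities: let α₁,α₂ ∈ ℂ, let t₁,t₂ be pure terms and s⃗₁,s⃗₂ term distributions such that α₁·t₁ + s⃗₁ ≡ α₂·t₂ + s⃗₂. Then: (1) if t₁ = t₂ = t and α₁ = α₂, then s⃗₁ ≡ s⃗₂, or s⃗₁ ≡ s⃗₂ + 0·t, or s⃗₂ ≡ s⃗₁ + 0·t; (2) if t₁ = t₂ = t but α₁ ≠ α₂, then s⃗₁ ≡ s⃗₂ + (α₂−α₁)·t or s⃗₂ ≡ s⃗₁ + (α₁−α₂)·t; (3) if t₁ ≠ t₂, then there exists a term distribution s⃗₃ with s⃗₁ ≡ s⃗₃ + α₂·t₂ and s⃗₂ ≡ s⃗₃ + α₁·t₁ (all disjunctions inclusive). -/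

import Mathlib

namespace LinAlg

/-! ### Syntax: pure values, pure terms, term distributions -/

mutual
inductive Val : Type where
  | var : ℕ → Val
  | lam : ℕ → Distr → Val
  | star : Val
  | pair : Val → Val → Val
  | inl : Val → Val
  | inr : Val → Val
inductive Term : Type where
  | val : Val → Term
  | app : Term → Term → Term
  | seq : Term → Distr → Term
  | letp : ℕ → ℕ → Term → Distr → Term
  | matc : Term → ℕ → Distr → ℕ → Distr → Term
inductive Distr : Type where
  | zero : Distr
  | single : Term → Distr
  | add : Distr → Distr → Distr
  | smul : ℂ → Distr → Distr
end

noncomputable instance : DecidableEq Val := fun _ _ => Classical.dec _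
noncomputable instance : DecidableEq Term := fun _ _ => Classical.dec _
noncomputable instance : DecidableEq Distr := fun _ _ => Classical.dec _

/-! ### The shallow congruence ≡ on term distributions -/

inductive Cong : Distr → Distr → Prop where
  | addZero (d : Distr) : Cong (d.add .zero) d
  | oneSmul (d : Distr) : Cong (Distr.smul 1 d) d
  | smulSmul (a b : ℂ) (d : Distr) : Cong (Distr.smul a (Distr.smul b d)) (Distr.smul (a * b) d)
  | addComm (d₁ d₂ : Distr) : Cong (d₁.add d₂) (d₂.add d₁)
  | addAssoc (d₁ d₂ d₃ : Distr) : Cong ((d₁.add d₂).add d₃) (d₁.add (d₂.add d₃))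
  | smulDistrib (a b : ℂ) (d : Distr) : Cong (Distr.smul (a + b) d) ((Distr.smul a d).add (Distr.smul b d))
  | smulAdd (a : ℂ) (d₁ d₂ : Distr) : Cong (Distr.smul a (d₁.add d₂)) ((Distr.smul a d₁).add (Distr.smul a d₂))
  | refl (d : Distr) : Cong d d
  | symm {d₁ d₂ : Distr} : Cong d₁ d₂ → Cong d₂ d₁
  | trans {d₁ d₂ d₃ : Distr} : Cong d₁ d₂ → Cong d₂ d₃ → Cong d₁ d₃
  | addCongr {d₁ d₁' d₂ d₂' : Distr} : Cong d₁ d₁' → Cong d₂ d₂' → Cong (d₁.add d₂) (d₁'.add d₂')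
  | smulCongr (a : ℂ) {d d' : Distr} : Cong d d' → Cong (Distr.smul a d) (Distr.smul a d')

/-! ### Free variables -/

mutual
def fvV : Val → Finset ℕ
  | .var y => {y}
  | .lam y b => fvD b \ {y}
  | .star => ∅
  | .pair v₁ v₂ => fvV v₁ ∪ fvV v₂
  | .inl v => fvV v
  | .inr v => fvV v
def fvT : Term → Finset ℕ
  | .val v => fvV v
  | .app s t => fvT s ∪ fvT t
  | .seq t s => fvT t ∪ fvD s
  | .letp y z t s => fvT t ∪ (fvD s \ {y, z})
  | .matc t y s₁ z s₂ => fvT t ∪ (fvD s₁ \ {y}) ∪ (fvD s₂ \ {z})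
def fvD : Distr → Finset ℕ
  | .zero => ∅
  | .single t => fvT t
  | .add d₁ d₂ => fvD d₁ ∪ fvD d₂
  | .smul _ d => fvD d
end

/-! ### Pure substitution -/

mutual
def substV (x : ℕ) (w : Val) : Val → Val
  | .var y => if y = x then w else .var y
  | .lam y b => if y = x then .lam y b else .lam y (substD x w b)
  | .star => .star
  | .pair v₁ v₂ => .pair (substV x w v₁) (substV x w v₂)
  | .inl v => .inl (substV x w v)
  | .inr v => .inr (substV x w v)
def substT (x : ℕ) (w : Val) : Term → Term
  | .val v => .val (substV x w v)
  | .app s t => .app (substT x w s) (substT x w t)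
  | .seq t s => .seq (substT x w t) (substD x w s)
  | .letp y z t s =>
      .letp y z (substT x w t) (if y = x ∨ z = x then s else substD x w s)
  | .matc t y s₁ z s₂ =>
      .matc (substT x w t) y (if y = x then s₁ else substD x w s₁)
        z (if z = x then s₂ else substD x w s₂)
def substD (x : ℕ) (w : Val) : Distr → Distr
  | .zero => .zero
  | .single t => .single (substT x w t)
  | .add d₁ d₂ => .add (substD x w d₁) (substD x w d₂)
  | .smul a d => .smul a (substD x w d)
end

/-! ### Linear extensions of the syntactic constructs -/

def appTD (s : Term) : Distr → Distr
  | .zero => .zero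
  | .single t => .single (.app s t)
  | .add d₁ d₂ => .add (appTD s d₁) (appTD s d₂)
  | .smul a d => .smul a (appTD s d)

def appDV : Distr → Val → Distr
  | .zero, _ => .zero
  | .single t, v => .single (.app t (.val v))
  | .add d₁ d₂, v => .add (appDV d₁ v) (appDV d₂ v)
  | .smul a d, v => .smul a (appDV d v)

def seqD : Distr → Distr → Distr
  | .zero, _ => .zero
  | .single t, s => .single (.seq t s)
  | .add d₁ d₂, s => .add (seqD d₁ s) (seqD d₂ s)
  | .smul a d, s => .smul a (seqD d s)

def letpD (x y : ℕ) : Distr → Distr → Distr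
  | .zero, _ => .zero
  | .single t, s => .single (.letp x y t s)
  | .add d₁ d₂, s => .add (letpD x y d₁ s) (letpD x y d₂ s)
  | .smul a d, s => .smul a (letpD x y d s)

def matcD : Distr → ℕ → Distr → ℕ → Distr → Distr
  | .zero, _, _, _, _ => .zero
  | .single t, y, s₁, z, s₂ => .single (.matc t y s₁ z s₂)
  | .add d₁ d₂, y, s₁, z, s₂ => .add (matcD d₁ y s₁ z s₂) (matcD d₂ y s₁ z s₂)
  | .smul a d, y, s₁, z, s₂ => .smul a (matcD d y s₁ z s₂)

/-- Bilinear application of distributions:  (Σᵢ αᵢ·tᵢ)(Σⱼ βⱼ·sⱼ) = Σᵢⱼ αᵢβⱼ·(tᵢ sⱼ). -/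
def appD : Distr → Distr → Distr
  | .zero, _ => .zero
  | .single t, w => appTD t w
  | .add d₁ d₂, w => .add (appD d₁ w) (appD d₂ w)
  | .smul a d, w => .smul a (appD d w)

/-- Bilinear substitution  d⟨x := w⃗⟩ = Σⱼ βⱼ · d[x := wⱼ]  (recursion on the value
distribution w⃗; non-value summands are junk and are sent to 0⃗). -/
def bsubst (x : ℕ) (d : Distr) : Distr → Distr
  | .zero => .zero
  | .single (.val w) => substD x w d
  | .single _ => .zero
  | .add w₁ w₂ => .add (bsubst x d w₁) (bsubst x d w₂)
  | .smul a w => .smul a (bsubst x d w)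

/-! ### Evaluation -/

inductive Atom : Term → Distr → Prop where
  | beta (x : ℕ) (b : Distr) (v : Val) :
      Atom (.app (.val (.lam x b)) (.val v)) (substD x v b)
  | seqStar (s : Distr) : Atom (.seq (.val .star) s) s
  | letPair (x y : ℕ) (v w : Val) (s : Distr) :
      Atom (.letp x y (.val (.pair v w)) s) (substD y w (substD x v s))
  | matchInl (v : Val) (y : ℕ) (s₁ : Distr) (z : ℕ) (s₂ : Distr) :
      Atom (.matc (.val (.inl v)) y s₁ z s₂) (substD y v s₁)
  | matchInr (v : Val) (y : ℕ) (s₁ : Distr) (z : ℕ) (s₂ : Distr) :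
      Atom (.matc (.val (.inr v)) y s₁ z s₂) (substD z v s₂)
  | appR (s : Term) {t : Term} {d : Distr} : Atom t d → Atom (.app s t) (appTD s d)
  | appL (v : Val) {t : Term} {d : Distr} : Atom t d → Atom (.app t (.val v)) (appDV d v)
  | seqC (s : Distr) {t : Term} {d : Distr} : Atom t d → Atom (.seq t s) (seqD d s)
  | letC (x y : ℕ) (s : Distr) {t : Term} {d : Distr} :
      Atom t d → Atom (.letp x y t s) (letpD x y d s)
  | matcC (y : ℕ) (s₁ : Distr) (z : ℕ) (s₂ : Distr) {t : Term} {d : Distr} :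
      Atom t d → Atom (.matc t y s₁ z s₂) (matcD d y s₁ z s₂)

/-- One-step evaluation:  t⃗ ≻ t⃗′. -/
def Step (d d' : Distr) : Prop :=
  ∃ (a : ℂ) (s : Term) (s' r : Distr),
    Cong d (Distr.add (.smul a (.single s)) r) ∧
    Cong d' (Distr.add (.smul a s') r) ∧ Atom s s'

/-- Evaluation  t⃗ ≻≻ t⃗′:  reflexive-transitive closure of one-step evaluation. -/
def Eval : Distr → Distr → Prop := Relation.ReflTransGen Step

/-! ### Value distributions, inner product, norm -/

def IsValT : Term → Prop
  | .val _ => True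
  | _ => False

def IsValD : Distr → Prop
  | .zero => True
  | .single t => IsValT t
  | .add d₁ d₂ => IsValD d₁ ∧ IsValD d₂
  | .smul _ d => IsValD d

/-- The set of closed value distributions. -/
def ClosedValD : Set Distr := {d | IsValD d ∧ fvD d = ∅}

/-- Total coefficient of the pure term `t` in the distribution `d`. -/
noncomputable def coeff : Distr → Term → ℂ
  | .zero, _ => 0
  | .single s, t => if s = t then 1 else 0
  | .add d₁ d₂, t => coeff d₁ t + coeff d₂ t
  | .smul a d, t => a * coeff d t

/-- The domain of a distribution (all pure terms occurring in it, even with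
coefficient 0). -/
noncomputable def domD : Distr → Finset Term
  | .zero => ∅
  | .single t => {t}
  | .add d₁ d₂ => domD d₁ ∪ domD d₂
  | .smul _ d => domD d

/-- The inner product ⟨v⃗|w⃗⟩ on value distributions. -/
noncomputable def innerD (v w : Distr) : ℂ :=
  ∑ t ∈ domD v, (starRingEnd ℂ) (coeff v t) * coeff w t

/-- The pseudo-ℓ²-norm ‖v⃗‖. -/
noncomputable def normD (v : Distr) : ℝ := Real.sqrt (innerD v v).re

/-- The unit sphere S of closed value distributions of norm 1. -/
def Sphere : Set Distr := {d | d ∈ ClosedValD ∧ normD d = 1}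

/-- Span(X): weak linear combinations of elements of X (taken modulo ≡). -/
inductive Span (X : Set Distr) : Distr → Prop where
  | mem {d : Distr} : d ∈ X → Span X d
  | zero : Span X .zero
  | add {d₁ d₂ : Distr} : Span X d₁ → Span X d₂ → Span X (d₁.add d₂)
  | smul (a : ℂ) {d : Distr} : Span X d → Span X (Distr.smul a d)
  | congr {d d' : Distr} : Span X d → Cong d d' → Span X d'

/-! ### Realizability: unitary types -/

/-- t⃗ ⊩ A :  t⃗ evaluates to some vector of ⟦A⟧. -/
def Realizes (A : Set Distr) (t : Distr) : Prop := ∃ v ∈ A, Eval t v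

/-- |A| : the set of (closed) realizers of A. -/
def realizersOf (A : Set Distr) : Set Distr := {t | fvD t = ∅ ∧ Realizes A t}

/-! ### Type constructors -/

def UnitT : Set Distr := {Distr.single (.val .star)}

/-- ♭A : the basis of A. -/
def flatT (X : Set Distr) : Set Distr :=
  {e | ∃ d ∈ X, ∃ v : Val, (Term.val v) ∈ domD d ∧ e = Distr.single (.val v)}

/-- ♯A : the unitary span of A. -/
def sharpT (X : Set Distr) : Set Distr := {d | Span X d ∧ d ∈ Sphere}

/-- Linear extension of a value constructor. -/
def mapVD (f : Val → Val) : Distr → Distr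
  | .zero => .zero
  | .single (.val v) => .single (.val (f v))
  | .single t => .single t
  | .add d₁ d₂ => .add (mapVD f d₁) (mapVD f d₂)
  | .smul a d => .smul a (mapVD f d)

def inlD : Distr → Distr := mapVD Val.inl
def inrD : Distr → Distr := mapVD Val.inr

/-- Bilinear extension of pairing. -/
def pairD : Distr → Distr → Distr
  | .zero, _ => .zero
  | .single (.val v), w => mapVD (Val.pair v) w
  | .single t, _ => .single t
  | .add d₁ d₂, w => .add (pairD d₁ w) (pairD d₂ w)
  | .smul a d, w => .smul a (pairD d w)

/-- A + B (simple sum). -/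
def plusT (A B : Set Distr) : Set Distr :=
  {d | (∃ v ∈ A, d = inlD v) ∨ (∃ w ∈ B, d = inrD w)}

/-- A × B (simple product). -/
def timesT (A B : Set Distr) : Set Distr :=
  {d | ∃ v ∈ A, ∃ w ∈ B, d = pairD v w}

/-- A → B (pure arrow). -/
def arrowT (A B : Set Distr) : Set Distr :=
  {d | ∃ (x : ℕ) (b : Distr), d = Distr.single (.val (.lam x b)) ∧ fvD d = ∅ ∧
      ∀ v ∈ A, Realizes B (bsubst x b v)}

/-- Σᵢ αᵢ · λx.t⃗ᵢ  ↦  Σᵢ αᵢ · t⃗ᵢ  (strips the λx in front of each summand). -/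
def stripLam (x : ℕ) : Distr → Distr
  | .zero => .zero
  | .single (.val (.lam y b)) => if y = x then b else .single (.val (.lam y b))
  | .single t => .single t
  | .add d₁ d₂ => .add (stripLam x d₁) (stripLam x d₂)
  | .smul a d => .smul a (stripLam x d)

/-- A ⇒ B (unitary arrow). -/
def uarrowT (A B : Set Distr) : Set Distr :=
  {d | d ∈ Sphere ∧ ∃ x : ℕ,
      (∀ t ∈ domD d, ∃ b : Distr, t = Term.val (.lam x b)) ∧
      ∀ v ∈ A, Realizes B (bsubst x (stripLam x d) v)}

/-! ### Booleans -/

def ttD : Distr := .single (.val (.inl .star))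
def ffD : Distr := .single (.val (.inr .star))

/-- 𝔹 = 𝕌 + 𝕌. -/
def BoolT : Set Distr := plusT UnitT UnitT

/-- ♯𝔹, the type of unitary Booleans. -/
def sharpBool : Set Distr := sharpT BoolT

/-- Boolean projection π : Span({tt,ff}) → ℂ². -/
noncomputable def piB (d : Distr) : ℂ × ℂ :=
  (coeff d (.val (.inl .star)), coeff d (.val (.inr .star)))

/-- t⃗ represents the operator F : ℂ² → ℂ². -/
def Represents (td : Distr) (F : ℂ × ℂ → ℂ × ℂ) : Prop :=
  ∀ v, Span BoolT v → ∃ w, Span BoolT w ∧ Eval (appD td v) w ∧ piB w = F (piB v)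

/-- Hermitian inner product on ℂ². -/
def hinner (u v : ℂ × ℂ) : ℂ :=
  (starRingEnd ℂ) u.1 * v.1 + (starRingEnd ℂ) u.2 * v.2

/-- A unitary operator on ℂ². -/
def IsUnitaryOp (F : ℂ × ℂ → ℂ × ℂ) : Prop :=
  ∀ u v : ℂ × ℂ, hinner (F u) (F v) = hinner u v

/-! ### Typing contexts, substitutions, judgments -/

abbrev Ctx := List (ℕ × Set Distr)
abbrev Subst := List (ℕ × Distr)

/-- Applying a substitution, one bilinear substitution at a time. -/
def applySub : Distr → Subst → Distr
  | d, [] => d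
  | d, (x, w) :: σ => applySub (bsubst x d w) σ

/-- σ ∈ ⟦Γ⟧. -/
def SubMem (σ : Subst) (Γ : Ctx) : Prop :=
  List.Forall₂ (fun p q => p.1 = q.1 ∧ p.2 ∈ q.2) σ Γ

def ctxDom (Γ : Ctx) : Set ℕ := {x | ∃ A, (x, A) ∈ Γ}

/-- dom♯(Γ): the variables of Γ whose type is not a pure-value type. -/
def ctxDomSharp (Γ : Ctx) : Set ℕ := {x | ∃ A, (x, A) ∈ Γ ∧ flatT A ≠ A}

/-- All the types of the context are unitary types (subsets of the sphere). -/
def CtxUnitary (Γ : Ctx) : Prop := ∀ p ∈ Γ, p.2 ⊆ Sphere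

/-- Validity of the typing judgment  Γ ⊢ t⃗ : A. -/
def ValidJ (Γ : Ctx) (t : Distr) (A : Set Distr) : Prop :=
  ctxDomSharp Γ ⊆ (fvD t : Set ℕ) ∧ (fvD t : Set ℕ) ⊆ ctxDom Γ ∧
  ∀ σ : Subst, SubMem σ Γ → Realizes A (applySub t σ)

/-- Validity of the orthogonality judgment  Γ | Δ₁ ⊢ t⃗₁ ⊥ Δ₂ ⊢ t⃗₂ : A. -/
def OrthoJ (Γ Δ₁ Δ₂ : Ctx) (t₁ t₂ : Distr) (A : Set Distr) : Prop :=
  ValidJ (Γ ++ Δ₁) t₁ A ∧ ValidJ (Γ ++ Δ₂) t₂ A ∧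
  ∀ σ σ₁ σ₂ : Subst, SubMem σ Γ → SubMem σ₁ Δ₁ → SubMem σ₂ Δ₂ →
    ∀ v₁ v₂ : Distr, v₁ ∈ ClosedValD → v₂ ∈ ClosedValD →
      Eval (applySub t₁ (σ ++ σ₁)) v₁ → Eval (applySub t₂ (σ ++ σ₂)) v₂ →
      innerD v₁ v₂ = 0

end LinAlg

/-! The invariants `coeff` and `domD` characterise `≡` completely: both are preserved by every
rule, and conversely every distribution `d` is `≡` to its normal form
`Σ_{t ∈ domD d} (coeff d t)·t`, which depends on nothing else. Each case of the theorem then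
amounts to exhibiting a right-hand side with the required coefficients and domain. The domain
is what forces the disjunctions: `t` may occur with coefficient `0` on either side, or on
neither. -/

namespace LinAlg

open Distr

instance : Trans Cong Cong Cong := ⟨Cong.trans⟩

local infix:50 " ≡ " => Cong

theorem Cong.coeff_eq {d d' : Distr} (h : d ≡ d') : coeff d = coeff d' := by
  induction h with
  | refl => rfl
  | symm _ ih => exact ih.symm
  | trans _ _ ih₁ ih₂ => exact ih₁.trans ih₂
  | addCongr _ _ ih₁ ih₂ => funext u; simp only [coeff, ih₁, ih₂]
  | smulCongr a _ ih => funext u; simp only [coeff, ih]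
  | _ => funext u; simp only [coeff]; ring

theorem Cong.domD_eq {d d' : Distr} (h : d ≡ d') : domD d = domD d' := by
  induction h with
  | refl => rfl
  | symm _ ih => exact ih.symm
  | trans _ _ ih₁ ih₂ => exact ih₁.trans ih₂
  | addCongr _ _ ih₁ ih₂ => simp only [domD, ih₁, ih₂]
  | smulCongr a _ ih => simp only [domD, ih]
  | addComm => exact Finset.union_comm _ _
  | addAssoc => exact Finset.union_assoc _ _ _
  | _ => simp [domD]

theorem coeff_eq_zero_of_notMem_domD : ∀ {d : Distr} {u : Term}, u ∉ domD d → coeff d u = 0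
  | .zero, _, _ => rfl
  | .single t, u, h => by
    simp only [domD, Finset.mem_singleton] at h
    simp [coeff, Ne.symm h]
  | .add d₁ d₂, _, h => by
    simp only [domD, Finset.mem_union, not_or] at h
    simp [coeff, coeff_eq_zero_of_notMem_domD h.1, coeff_eq_zero_of_notMem_domD h.2]
  | .smul _ d, _, h => by
    simp [coeff, coeff_eq_zero_of_notMem_domD (d := d) h]

theorem Cong.add_left_comm (x y z : Distr) : x.add (y.add z) ≡ y.add (x.add z) :=
  calc x.add (y.add z) ≡ (x.add y).add z := (Cong.addAssoc x y z).symm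
    _ ≡ (y.add x).add z := Cong.addCongr (Cong.addComm x y) (Cong.refl z)
    _ ≡ y.add (x.add z) := Cong.addAssoc y x z

theorem Cong.zero_add (x : Distr) : zero.add x ≡ x :=
  (Cong.addComm _ _).trans (Cong.addZero x)

theorem Cong.smul_add_smul_add (a b : ℂ) (d r : Distr) :
    (smul a d).add ((smul b d).add r) ≡ (smul (a + b) d).add r :=
  (Cong.addAssoc _ _ _).symm.trans (Cong.addCongr (Cong.smulDistrib a b d).symm (Cong.refl r))

/- Not an axiom of `≡`: split `1 = a + (1 - a)` and absorb, using `u·0⃗ + v·0⃗ ≡ u·0⃗`,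
which in turn comes from `v·0⃗ + v·0⃗ ≡ v·(0⃗ + 0⃗) ≡ v·0⃗`. -/
theorem Cong.smul_zero (a : ℂ) : smul a zero ≡ zero := by
  have split (u v : ℂ) : smul u zero ≡ (smul (u - v) zero).add (smul v zero) := by
    simpa using Cong.smulDistrib (u - v) v zero
  have idem (v : ℂ) : (smul v zero).add (smul v zero) ≡ smul v zero :=
    (Cong.smulAdd v zero zero).symm.trans (Cong.smulCongr v (Cong.addZero zero))
  have absorb (u v : ℂ) : (smul u zero).add (smul v zero) ≡ smul u zero :=
    calc (smul u zero).add (smul v zero)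
        ≡ ((smul (u - v) zero).add (smul v zero)).add (smul v zero) :=
          Cong.addCongr (split u v) (Cong.refl _)
      _ ≡ (smul (u - v) zero).add ((smul v zero).add (smul v zero)) := Cong.addAssoc _ _ _
      _ ≡ (smul (u - v) zero).add (smul v zero) := Cong.addCongr (Cong.refl _) (idem v)
      _ ≡ smul u zero := (split u v).symm
  calc smul a zero ≡ (smul a zero).add (smul (1 - a) zero) := (absorb a (1 - a)).symm
    _ ≡ smul 1 zero := by simpa using (Cong.smulDistrib a (1 - a) zero).symm
    _ ≡ zero := Cong.oneSmul zero

def linComb (c : Term → ℂ) : List Term → Distr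
  | [] => zero
  | t :: L => (smul (c t) (single t)).add (linComb c L)

theorem linComb_congr {c c' : Term → ℂ} : ∀ {L : List Term}, (∀ t ∈ L, c t = c' t) →
    linComb c L = linComb c' L
  | [], _ => rfl
  | t :: L, h => by
    rw [linComb, linComb, h t List.mem_cons_self,
      linComb_congr fun u hu => h u (List.mem_cons_of_mem t hu)]

theorem Cong.linComb_perm (c : Term → ℂ) {L L' : List Term} (h : L.Perm L') :
    linComb c L ≡ linComb c L' := by
  induction h with
  | nil => exact Cong.refl _
  | cons _ _ ih => exact Cong.addCongr (Cong.refl _) ih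
  | swap => exact Cong.add_left_comm _ _ _
  | trans _ _ ih₁ ih₂ => exact ih₁.trans ih₂

theorem coeff_linComb (c : Term → ℂ) (u : Term) :
    ∀ {L : List Term}, L.Nodup → coeff (linComb c L) u = if u ∈ L then c u else 0
  | [], _ => rfl
  | t :: L, hL => by
    rw [List.nodup_cons] at hL
    rw [linComb, coeff, coeff, coeff, coeff_linComb c u hL.2]
    by_cases hu : u = t
    · subst hu; simp [hL.1]
    · simp [hu, Ne.symm hu]

theorem domD_linComb (c : Term → ℂ) : ∀ L : List Term, domD (linComb c L) = L.toFinset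
  | [] => rfl
  | t :: L => by
    rw [linComb, domD, domD, domD, domD_linComb c L, List.toFinset_cons, Finset.insert_eq]

theorem Cong.linComb_toList_erase (c : Term → ℂ) {S : Finset Term} {t : Term} (ht : t ∈ S) :
    linComb c S.toList ≡ (smul (c t) (single t)).add (linComb c (S.erase t).toList) := by
  conv_lhs => rw [← Finset.insert_erase ht]
  exact Cong.linComb_perm c (Finset.toList_insert (Finset.notMem_erase t S))

theorem coeff_smul_single_add (a : ℂ) (t : Term) (s : Distr) (u : Term) :
    coeff ((smul a (single t)).add s) u = (if t = u then a else 0) + coeff s u := by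
  simp [coeff]

theorem coeff_add_smul_single (a : ℂ) (t : Term) (s : Distr) (u : Term) :
    coeff (s.add (smul a (single t))) u = coeff s u + if t = u then a else 0 := by
  simp [coeff]

theorem domD_smul_single_add (a : ℂ) (t : Term) (s : Distr) :
    domD ((smul a (single t)).add s) = insert t (domD s) :=
  (Finset.insert_eq t (domD s)).symm

theorem domD_add_smul_single (a : ℂ) (t : Term) (s : Distr) :
    domD (s.add (smul a (single t))) = insert t (domD s) :=
  (Finset.union_comm _ _).trans (Finset.insert_eq t (domD s)).symm

noncomputable def normalForm (d : Distr) : Distr := linComb (coeff d) (domD d).toList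

theorem normalForm_eq_of_cong {d d' : Distr} (h : d ≡ d') : normalForm d = normalForm d' := by
  rw [normalForm, normalForm, h.coeff_eq, h.domD_eq]

theorem Cong.smul_single_add_normalForm (a : ℂ) (t : Term) (e : Distr) :
    (smul a (single t)).add (normalForm e) ≡ normalForm ((smul a (single t)).add e) := by
  set c' := coeff ((smul a (single t)).add e)
  set R := linComb (coeff e) ((domD e).erase t).toList
  have hc't : c' t = a + coeff e t := by simp [c', coeff_smul_single_add]
  have hc' : ∀ u ∈ ((domD e).erase t).toList, c' u = coeff e u := fun u hu => by
    simp [c', coeff_smul_single_add, Ne.symm (Finset.ne_of_mem_erase (Finset.mem_toList.mp hu))]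
  have hnf : normalForm ((smul a (single t)).add e) ≡ (smul (a + coeff e t) (single t)).add R := by
    rw [normalForm, domD_smul_single_add]
    calc linComb c' (insert t (domD e)).toList
        ≡ (smul (c' t) (single t)).add (linComb c' ((insert t (domD e)).erase t).toList) :=
          Cong.linComb_toList_erase c' (Finset.mem_insert_self t (domD e))
      _ = (smul (a + coeff e t) (single t)).add R := by
          rw [hc't, Finset.erase_insert_eq_erase, linComb_congr hc']
  refine Cong.trans ?_ hnf.symm
  by_cases ht : t ∈ domD e
  · calc (smul a (single t)).add (normalForm e)
        ≡ (smul a (single t)).add ((smul (coeff e t) (single t)).add R) :=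
          Cong.addCongr (Cong.refl _) (Cong.linComb_toList_erase _ ht)
      _ ≡ (smul (a + coeff e t) (single t)).add R := Cong.smul_add_smul_add _ _ _ _
  · rw [coeff_eq_zero_of_notMem_domD ht, add_zero, normalForm, ← Finset.erase_eq_of_notMem ht]
    exact Cong.refl _

-- The scalar and the accumulator `e` make the statement strong enough for induction on `d`.
theorem Cong.smul_add_normalForm :
    ∀ (d : Distr) (a : ℂ) (e : Distr),
      (smul a d).add (normalForm e) ≡ normalForm ((smul a d).add e)
  | .zero, a, e => by
    have h (x : Distr) : (smul a zero).add x ≡ x :=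
      (Cong.addCongr (Cong.smul_zero a) (Cong.refl x)).trans (Cong.zero_add x)
    rw [normalForm_eq_of_cong (h e)]
    exact h _
  | .single t, a, e => Cong.smul_single_add_normalForm a t e
  | .add d₁ d₂, a, e =>
    calc (smul a (d₁.add d₂)).add (normalForm e)
        ≡ (smul a d₁).add ((smul a d₂).add (normalForm e)) :=
          (Cong.addCongr (Cong.smulAdd _ _ _) (Cong.refl _)).trans (Cong.addAssoc _ _ _)
      _ ≡ (smul a d₁).add (normalForm ((smul a d₂).add e)) :=
          Cong.addCongr (Cong.refl _) (Cong.smul_add_normalForm d₂ a e)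
      _ ≡ normalForm ((smul a d₁).add ((smul a d₂).add e)) := Cong.smul_add_normalForm d₁ a _
      _ = normalForm ((smul a (d₁.add d₂)).add e) := normalForm_eq_of_cong
          ((Cong.addAssoc _ _ _).symm.trans (Cong.addCongr (Cong.smulAdd _ _ _).symm (Cong.refl e)))
  | .smul b d, a, e => by
    have h := Cong.addCongr (Cong.smulSmul a b d) (Cong.refl e)
    rw [normalForm_eq_of_cong h]
    exact (Cong.addCongr (Cong.smulSmul a b d) (Cong.refl _)).trans
      (Cong.smul_add_normalForm d _ e)

theorem cong_normalForm (d : Distr) : d ≡ normalForm d := by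
  have h₀ : (smul 1 d).add zero ≡ d := (Cong.addZero _).trans (Cong.oneSmul d)
  have hz : normalForm zero = zero := by rw [normalForm, domD, Finset.toList_empty, linComb]
  calc d ≡ (smul 1 d).add (normalForm zero) := by rw [hz]; exact h₀.symm
    _ ≡ normalForm ((smul 1 d).add zero) := Cong.smul_add_normalForm d 1 zero
    _ = normalForm d := normalForm_eq_of_cong h₀

theorem cong_iff_coeff_eq_and_domD_eq {d d' : Distr} :
    (d ≡ d') ↔ coeff d = coeff d' ∧ domD d = domD d' := by
  refine ⟨fun h => ⟨h.coeff_eq, h.domD_eq⟩, fun ⟨hc, hd⟩ => ?_⟩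
  have h : normalForm d = normalForm d' := by rw [normalForm, hc, hd]; rfl
  exact (cong_normalForm d).trans (h ▸ (cong_normalForm d').symm)

theorem Cong.left_cancel_smul_single_of_mem {a₁ a₂ : ℂ} {t : Term} {s₁ s₂ : Distr}
    (h : (smul a₁ (single t)).add s₁ ≡ (smul a₂ (single t)).add s₂) (ht : t ∈ domD s₁) :
    s₁ ≡ s₂.add (smul (a₂ - a₁) (single t)) := by
  obtain ⟨hc, hd⟩ := cong_iff_coeff_eq_and_domD_eq.mp h
  refine cong_iff_coeff_eq_and_domD_eq.mpr ⟨funext fun u => ?_, ?_⟩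
  · have hu := congrFun hc u
    rw [coeff_smul_single_add, coeff_smul_single_add] at hu
    rw [coeff_add_smul_single]
    split_ifs at hu ⊢ <;> linear_combination hu
  · rw [domD_smul_single_add, domD_smul_single_add, Finset.insert_eq_of_mem ht] at hd
    rw [domD_add_smul_single, hd]

theorem Cong.left_cancel_smul_single_of_notMem {a₁ a₂ : ℂ} {t : Term} {s₁ s₂ : Distr}
    (h : (smul a₁ (single t)).add s₁ ≡ (smul a₂ (single t)).add s₂)
    (ht₁ : t ∉ domD s₁) (ht₂ : t ∉ domD s₂) : a₁ = a₂ ∧ (s₁ ≡ s₂) := by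
  obtain ⟨hc, hd⟩ := cong_iff_coeff_eq_and_domD_eq.mp h
  have hu (u : Term) := congrFun hc u
  simp only [coeff_smul_single_add] at hu
  refine ⟨by simpa [coeff_eq_zero_of_notMem_domD, ht₁, ht₂] using hu t,
    cong_iff_coeff_eq_and_domD_eq.mpr ⟨funext fun u => ?_, ?_⟩⟩
  · by_cases htu : t = u
    · subst htu
      rw [coeff_eq_zero_of_notMem_domD ht₁, coeff_eq_zero_of_notMem_domD ht₂]
    · simpa [htu] using hu u
  · rw [domD_smul_single_add, domD_smul_single_add] at hd
    rw [← Finset.erase_insert ht₁, hd, Finset.erase_insert ht₂]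

theorem _root_.Finset.insert_inter_of_insert_eq_insert {α : Type*} [DecidableEq α] {a b : α}
    {s t : Finset α} (h : insert a s = insert b t) (hab : a ≠ b) : insert b (s ∩ t) = s := by
  ext x
  have hx := congrArg (x ∈ ·) h
  simp only [Finset.mem_insert, Finset.mem_inter, eq_iff_iff] at hx ⊢
  grind

theorem Cong.exists_common_rest_of_ne {a₁ a₂ : ℂ} {t₁ t₂ : Term} {s₁ s₂ : Distr}
    (h : (smul a₁ (single t₁)).add s₁ ≡ (smul a₂ (single t₂)).add s₂) (hne : t₁ ≠ t₂) :
    ∃ s₃ : Distr, (s₁ ≡ s₃.add (smul a₂ (single t₂))) ∧ (s₂ ≡ s₃.add (smul a₁ (single t₁))) := by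
  obtain ⟨hc, hd⟩ := cong_iff_coeff_eq_and_domD_eq.mp h
  have hu (u : Term) := congrFun hc u
  simp only [coeff_smul_single_add] at hu
  rw [domD_smul_single_add, domD_smul_single_add] at hd
  have hD₁ := Finset.insert_inter_of_insert_eq_insert hd hne
  have hD₂ := Finset.insert_inter_of_insert_eq_insert hd.symm hne.symm
  rw [Finset.inter_comm] at hD₂
  set E := domD s₁ ∩ domD s₂
  set g : Term → ℂ := fun u => coeff s₁ u - if t₂ = u then a₂ else 0
  have hg (u : Term) : g u = coeff s₂ u - if t₁ = u then a₁ else 0 := by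
    linear_combination hu u
  have hg₀ (u : Term) (hu : u ∉ E) : g u = 0 := by
    rw [Finset.mem_inter, not_and_or] at hu
    rcases hu with hu | hu
    · have ht₂u : t₂ ≠ u := fun h => hu (h ▸ hD₁ ▸ Finset.mem_insert_self t₂ E)
      simp [g, coeff_eq_zero_of_notMem_domD hu, ht₂u]
    · have ht₁u : t₁ ≠ u := fun h => hu (h ▸ hD₂ ▸ Finset.mem_insert_self t₁ E)
      simp [hg, coeff_eq_zero_of_notMem_domD hu, ht₁u]
  have hcoeff : coeff (linComb g E.toList) = g := funext fun u => by
    rw [coeff_linComb g u (Finset.nodup_toList E)]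
    simp only [Finset.mem_toList]
    split_ifs with hu
    · rfl
    · exact (hg₀ u hu).symm
  have hdomD : domD (linComb g E.toList) = E := by rw [domD_linComb, Finset.toList_toFinset]
  refine ⟨linComb g E.toList, cong_iff_coeff_eq_and_domD_eq.mpr ⟨funext fun u => ?_, ?_⟩,
    cong_iff_coeff_eq_and_domD_eq.mpr ⟨funext fun u => ?_, ?_⟩⟩
  · rw [coeff_add_smul_single, hcoeff]
    ring
  · rw [domD_add_smul_single, hdomD, hD₁]
  · rw [coeff_add_smul_single, hcoeff, hg]
    ring
  · rw [domD_add_smul_single, hdomD, hD₂]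

/-- Simplifying equalities for α₁·t₁ + s⃗₁ ≡ α₂·t₂ + s⃗₂. -/
theorem simplifying_equalities (a₁ a₂ : ℂ) (t₁ t₂ : Term) (s₁ s₂ : Distr)
    (h : Cong (Distr.add (.smul a₁ (.single t₁)) s₁)
              (Distr.add (.smul a₂ (.single t₂)) s₂)) :
    (t₁ = t₂ → a₁ = a₂ →
      (Cong s₁ s₂ ∨ Cong s₁ (Distr.add s₂ (.smul 0 (.single t₁))) ∨
        Cong s₂ (Distr.add s₁ (.smul 0 (.single t₁))))) ∧
    (t₁ = t₂ → a₁ ≠ a₂ →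
      (Cong s₁ (Distr.add s₂ (.smul (a₂ - a₁) (.single t₁))) ∨
        Cong s₂ (Distr.add s₁ (.smul (a₁ - a₂) (.single t₁))))) ∧
    (t₁ ≠ t₂ →
      ∃ s₃ : Distr, Cong s₁ (Distr.add s₃ (.smul a₂ (.single t₂))) ∧
        Cong s₂ (Distr.add s₃ (.smul a₁ (.single t₁)))) := by
  refine ⟨?_, ?_, h.exists_common_rest_of_ne⟩
  · rintro rfl rfl
    by_cases h₁ : t₁ ∈ domD s₁
    · simpa only [sub_self] using Or.inr (Or.inl (h.left_cancel_smul_single_of_mem h₁))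
    by_cases h₂ : t₁ ∈ domD s₂
    · simpa only [sub_self] using Or.inr (Or.inr (h.symm.left_cancel_smul_single_of_mem h₂))
    exact Or.inl (h.left_cancel_smul_single_of_notMem h₁ h₂).2
  · rintro rfl hne
    by_cases h₁ : t₁ ∈ domD s₁
    · exact Or.inl (h.left_cancel_smul_single_of_mem h₁)
    by_cases h₂ : t₁ ∈ domD s₂
    · exact Or.inr (h.symm.left_cancel_smul_single_of_mem h₂)
    exact absurd (h.left_cancel_smul_single_of_notMem h₁ h₂).1 hne

end LinAlg
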